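/- Let V be a rooted directed tree with root v0 and μ=(μ_v)_{v∈V} a weight of nonzero scalars such that ∑_{u∈Chi(v)}|μ_u|^{-1}<∞ for all v∈V (i.e., the unweighted backward shift B is defined on ℓ^∞(V,μ), equivalently on c_0(V,μ)). Let 𝒥 be the set of all backward invariant sequences f on V with f(v0)=1. Then: (a) inf_{f∈𝒥} sup_{v∈V}|f(v)μ_v| = r_∞(V,μ) and inf_{f∈𝒥} sup_{v∈V,v≠v0}|f(v)μ_v| = c_∞(V,μ). (b) If r_∞(V,μ)<∞ (equivalently c_∞(V,μ)<∞), then there exists a backward invariant sequence f∈ℓ^∞(V,μ) with f(v0)=1 attaining both infima; one such f is given, for v=v_n∈gen_n with path (v0,v1,…,v_n) from v0 to v_n, by f(v)=∏_{k=1}^n [r_∞(V(v_k),μ)^{-1} / ∑_{u∈Chi(par(v_k))} r_∞(V(u),μ)^{-1}] > 0 if r_∞(V(v),μ)<∞, and f(v)=0 if r_∞(V(v),μ)=∞. -/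

import Mathlib

open scoped ENNReal NNReal Topology Classical
open Filter

namespace PaperTree

/-! ### Directed trees -/

variable {V : Type*}

/-- Iterated parent map of a directed tree given by a parent function. -/
def parIter (par : V → Option V) : ℕ → V → Option V
  | 0, v => some v
  | n + 1, v => (par v).bind (parIter par n)

/-- `par` is the parent function of a (countable, connected, acyclic) directed tree on `V`,
in which every vertex has at most one parent and at most one vertex (the root) has none. -/
structure IsDirectedTree (par : V → Option V) : Prop where
  countable : Countable V
  acyclic : ∀ (v : V) (n : ℕ), 0 < n → parIter par n v ≠ some v
  connected : ∀ u v : V, ∃ (m n : ℕ) (w : V), parIter par m u = some w ∧ parIter par n v = some w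
  root_unique : ∀ u v : V, par u = none → par v = none → u = v

/-- The set of children of `v`. -/
def children (par : V → Option V) (v : V) : Set V := {u : V | par u = some v}

/-- The set of descendants of `v` (including `v`); the rooted subtree `V(v)`. -/
def descendants (par : V → Option V) (v : V) : Set V := {u : V | ∃ n : ℕ, parIter par n u = some v}

def IsLeafV (par : V → Option V) (v : V) : Prop := children par v = ∅

def Leafless (par : V → Option V) : Prop := ∀ v : V, children par v ≠ ∅

def IsRoot (par : V → Option V) (v : V) : Prop := par v = none

def Rooted (par : V → Option V) : Prop := ∃ v : V, IsRoot par v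

def Unrooted (par : V → Option V) : Prop := ∀ v : V, par v ≠ none

/-- The tree has a free left end: some vertex all of whose (proper) ancestors
have exactly one child. -/
def HasFreeLeftEnd (par : V → Option V) : Prop :=
  ∃ v : V, ∀ n : ℕ, 1 ≤ n → ∀ w : V, parIter par n v = some w → ∃! u : V, u ∈ children par w

/-- The tree has finite length (all branches have uniformly bounded length). -/
def FiniteLength (par : V → Option V) : Prop := ∃ m : ℕ, ∀ u : V, parIter par (m + 1) u = none

/-- Product of the weights along the upward path of length `n` ending at `u`;
for `u ∈ Chi^n(v)` this is `λ(v → u)`, and `pathProd par lam n v = λ(par^n(v) → v)`. -/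
def pathProd {𝕜 : Type*} [Monoid 𝕜] (par : V → Option V) (lam : V → 𝕜) : ℕ → V → 𝕜
  | 0, _ => 1
  | n + 1, u => lam u * ((par u).elim 1 (pathProd par lam n))

/-- A (finite or infinite, maximal) branch starting at `v`, encoded with `Option`. -/
def IsOptBranch (par : V → Option V) (v : V) (b : ℕ → Option V) : Prop :=
  b 0 = some v ∧
  (∀ (k : ℕ) (w : V), b k = some w →
      (children par w = ∅ ∧ b (k + 1) = none) ∨ ∃ u ∈ children par w, b (k + 1) = some u) ∧
  ∀ k : ℕ, b k = none → b (k + 1) = none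

/-- An infinite branch starting at `v` (adequate for leafless trees). -/
def IsBranch (par : V → Option V) (v : V) (b : ℕ → V) : Prop :=
  b 0 = v ∧ ∀ k : ℕ, b (k + 1) ∈ children par (b k)

/-- The `[0,∞]`-valued absolute weight associated with a scalar weight. -/
noncomputable def nw {𝕜 : Type*} [RCLike 𝕜] (μ : V → 𝕜) : V → ℝ≥0∞ := fun v => (‖μ v‖₊ : ℝ≥0∞)

/-! ### Fixed points over subtrees and backward invariant sequences -/

section Invariance

variable {𝕜 : Type*} [RCLike 𝕜] {V : Type*}

/-- The restriction of `g` to the subtree `W` is a fixed point of the weighted backward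
shift over `W`: `g w = ∑_{u ∈ Chi(w) ∩ W} λ_u g u` (unconditionally) for every `w ∈ W`. -/
def FixedPtOver (par : V → Option V) (lam : V → 𝕜) (g : V → 𝕜) (W : Set V) : Prop :=
  ∀ w ∈ W, HasSum (fun u : ↥(children par w ∩ W) => lam u.1 * g u.1) (g w)

/-- `g` is backward invariant with respect to the children map `chi`:
`g v = ∑_{u ∈ chi v} g u` (unconditionally) for every non-leaf `v`. -/
def BackwardInv (chi : V → Set V) (g : V → 𝕜) : Prop :=
  ∀ v : V, chi v ≠ ∅ → HasSum (fun u : ↥(chi v) => g u.1) (g v)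

/-- Backward invariance over a subtree `W` (with respect to the children map `chi`). -/
def BackwardInvOn (chi : V → Set V) (W : Set V) (g : V → 𝕜) : Prop :=
  ∀ w ∈ W, (chi w ∩ W).Nonempty → HasSum (fun u : ↥(chi w ∩ W) => g u.1) (g w)

/-- A scalar that is a (strictly) positive real. -/
def IsPosScalar {𝕜 : Type*} [RCLike 𝕜] (c : 𝕜) : Prop := ∃ r : ℝ, 0 < r ∧ c = (r : 𝕜)

end Invariance

/-! ### The generalized continued fractions `c_p` and resistances `r_p` -/

section Constants

/-- Conjugate exponent. -/
noncomputable def conjExp (p : ℝ) : ℝ := p / (p - 1)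

variable {V : Type*}

/-- `cpAux chi w p m v` is the continued fraction `c_p` of the subtree of descendants of `v`
(with respect to the children map `chi`) truncated at depth `m`, with weight `w`. -/
noncomputable def cpAux (chi : V → Set V) (w : V → ℝ≥0∞) (p : ℝ) : ℕ → V → ℝ≥0∞
  | 0, _ => 0
  | m + 1, v =>
      if chi v = ∅ then 0
      else (∑' u : ↥(chi v),
              (w u.1 ^ p + cpAux chi w p m u.1 ^ p) ^ (-(conjExp p / p))) ^ (-(1 / conjExp p))

/-- The continued fraction `c_p(V(v), w)` of order `1 < p < ∞`. -/
noncomputable def cpC (chi : V → Set V) (w : V → ℝ≥0∞) (p : ℝ) (v : V) : ℝ≥0∞ :=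
  ⨆ m : ℕ, cpAux chi w p m v

/-- The resistance `r_p(V(v), w)` of order `1 < p < ∞`. -/
noncomputable def rpC (chi : V → Set V) (w : V → ℝ≥0∞) (p : ℝ) (v : V) : ℝ≥0∞ :=
  (w v ^ p + cpC chi w p v ^ p) ^ (1 / p)

/-- Truncated continued fraction of order `p = ∞`. -/
noncomputable def cInfAux (chi : V → Set V) (w : V → ℝ≥0∞) : ℕ → V → ℝ≥0∞
  | 0, _ => 0
  | m + 1, v =>
      if chi v = ∅ then 0
      else (∑' u : ↥(chi v), (max (w u.1) (cInfAux chi w m u.1))⁻¹)⁻¹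

/-- The continued fraction `c_∞(V(v), w)`. -/
noncomputable def cInfC (chi : V → Set V) (w : V → ℝ≥0∞) (v : V) : ℝ≥0∞ :=
  ⨆ m : ℕ, cInfAux chi w m v

/-- The resistance `r_∞(V(v), w)`. -/
noncomputable def rInfC (chi : V → Set V) (w : V → ℝ≥0∞) (v : V) : ℝ≥0∞ :=
  max (w v) (cInfC chi w v)

end Constants

/-! ### Weighted `ℓ^p`- and sup-norms on subsets of vertices -/

section Norms

variable {𝕜 : Type*} [RCLike 𝕜] {V : Type*}

/-- `(∑_{v ∈ S} (|g v| w v)^p)^{1/p}` in `[0,∞]`. -/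
noncomputable def lpSumOn (w : V → ℝ≥0∞) (p : ℝ) (S : Set V) (g : V → 𝕜) : ℝ≥0∞ :=
  (∑' v : ↥S, ((‖g v.1‖₊ : ℝ≥0∞) * w v.1) ^ p) ^ (1 / p)

/-- `sup_{v ∈ S} |g v| w v` in `[0,∞]`. -/
noncomputable def supNormOn (w : V → ℝ≥0∞) (S : Set V) (g : V → 𝕜) : ℝ≥0∞ :=
  ⨆ v : ↥S, (‖g v.1‖₊ : ℝ≥0∞) * w v.1

end Norms

/-!
Lower bound: backward invariance gives `‖g v‖ ≤ ∑_{u ∈ Chi(v)} ‖g u‖`, and induction on the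
truncation depth `m` yields `‖g v‖ · c_m(V(v)) ≤ sup_{x ≠ root} ‖g x‖ |μ_x|` for every `v`; at the
root, where `g = 1`, this bounds both infima from below by `c_∞` and `r_∞`.

Upper bound: since `∑_{u ∈ Chi(v)} |μ_u|⁻¹ < ∞`, monotone convergence turns the definition of
`c_∞` into the recursion `c_∞(V(v)) = (∑_{u ∈ Chi(v)} r_∞(V(u))⁻¹)⁻¹`. The extremal sequence
splits `f(v)` among the children of `v` in proportion to `r_∞(V(u))⁻¹`, so it is backward
invariant, and along every edge `v → u` the recursion gives `f(u) r_∞(V(u)) ≤ f(v) c_∞(V(v))`.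
Chaining these inequalities down from the root bounds its weighted sup by `c_∞(V)` off the root
and by `r_∞(V)` on all of `V`.
-/

section Tree

variable {V : Type*} {par : V → Option V} {root : V}

theorem parIter_add (m n : ℕ) (v : V) :
    parIter par (m + n) v = (parIter par m v).bind (parIter par n) := by
  induction m generalizing v with
  | zero => simp [parIter]
  | succ m ih =>
    rw [Nat.add_right_comm, parIter, parIter, Option.bind_assoc]
    exact congrArg _ (funext ih)

theorem parIter_succ_of_isRoot (hroot : IsRoot par root) (n : ℕ) :
    parIter par (n + 1) root = none := by
  rw [parIter, hroot]
  rfl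

theorem ne_root_of_par_eq_some (hroot : IsRoot par root) {v p : V} (h : par v = some p) :
    v ≠ root := by
  rintro rfl
  simp [IsRoot, h] at hroot

theorem children_nonempty_of_par_eq_some {v p : V} (h : par v = some p) :
    (children par p).Nonempty :=
  ⟨v, h⟩

theorem IsDirectedTree.exists_par_eq_some (hTree : IsDirectedTree par) (hroot : IsRoot par root)
    {v : V} (hv : v ≠ root) : ∃ p, par v = some p :=
  Option.ne_none_iff_exists'.mp fun h => hv (hTree.root_unique v root h hroot)

theorem IsDirectedTree.exists_parIter_eq_root (hTree : IsDirectedTree par)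
    (hroot : IsRoot par root) (v : V) : ∃ n, parIter par n v = some root := by
  obtain ⟨m, n, w, hm, hn⟩ := hTree.connected v root
  rcases n with _ | n
  · obtain rfl : root = w := Option.some_injective _ hn
    exact ⟨m, hm⟩
  · simp [parIter_succ_of_isRoot hroot] at hn

theorem eq_of_parIter_eq_root (hroot : IsRoot par root) {m n : ℕ} {v : V}
    (hm : parIter par m v = some root) (hn : parIter par n v = some root) : m = n := by
  wlog hmn : m ≤ n generalizing m n
  · exact (this hn hm (by omega)).symm
  obtain ⟨k, rfl⟩ := Nat.exists_eq_add_of_le hmn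
  rcases k with _ | k
  · rfl
  · rw [parIter_add, hm, Option.bind_some, parIter_succ_of_isRoot hroot] at hn
    simp at hn

noncomputable def depth (par : V → Option V) (root : V) (v : V) : ℕ :=
  sInf {n | parIter par n v = some root}

theorem parIter_depth (hTree : IsDirectedTree par) (hroot : IsRoot par root) (v : V) :
    parIter par (depth par root v) v = some root :=
  Nat.sInf_mem (hTree.exists_parIter_eq_root hroot v)

theorem depth_root : depth par root root = 0 :=
  Nat.sInf_eq_zero.mpr (Or.inl rfl)

theorem depth_of_par_eq_some (hTree : IsDirectedTree par) (hroot : IsRoot par root) {v p : V}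
    (h : par v = some p) : depth par root v = depth par root p + 1 := by
  refine eq_of_parIter_eq_root hroot (parIter_depth hTree hroot v) ?_
  rw [parIter, h]
  exact parIter_depth hTree hroot p

@[elab_as_elim]
theorem IsDirectedTree.induction_from_root (hTree : IsDirectedTree par) (hroot : IsRoot par root)
    {P : V → Prop} (h0 : P root) (hstep : ∀ v p, par v = some p → P p → P v) (v : V) : P v := by
  obtain ⟨n, hn⟩ := hTree.exists_parIter_eq_root hroot v
  induction n generalizing v with
  | zero => exact Option.some_injective _ hn ▸ h0
  | succ n ih =>
    rw [parIter] at hn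
    cases hp : par v with
    | none => simp [hp] at hn
    | some p =>
      rw [hp, Option.bind_some] at hn
      exact hstep v p hp (ih p hn)

end Tree

theorem tsum_iInf_of_antitone {ι : Type*} {f : ℕ → ι → ℝ≥0∞} (hf : Antitone f)
    (h0 : ∑' i, f 0 i ≠ ⊤) : ∑' i, ⨅ n, f n i = ⨅ n, ∑' i, f n i := by
  let _ : MeasurableSpace ι := ⊤
  have h := MeasureTheory.lintegral_iInf (μ := MeasureTheory.Measure.count)
    (fun n => measurable_from_top) hf (by rwa [MeasureTheory.lintegral_count])
  simpa only [iInf_apply, MeasureTheory.lintegral_count] using h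

theorem hasSum_ofReal_toReal {𝕜 : Type*} [RCLike 𝕜] {ι : Type*} {f : ι → ℝ≥0∞}
    (hf : ∑' i, f i ≠ ⊤) : HasSum (fun i => ((f i).toReal : 𝕜)) ((∑' i, f i).toReal : 𝕜) := by
  rw [ENNReal.tsum_toReal_eq fun i => ENNReal.ne_top_of_tsum_ne_top hf i]
  exact (ENNReal.hasSum_toReal hf).mapL (RCLike.ofRealCLM (K := 𝕜))

theorem nnnorm_ofReal_toReal {𝕜 : Type*} [RCLike 𝕜] {x : ℝ≥0∞} (hx : x ≠ ⊤) :
    (‖((x.toReal : ℝ) : 𝕜)‖₊ : ℝ≥0∞) = x := by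
  rw [← enorm_eq_nnnorm, ← ofReal_norm, RCLike.norm_ofReal, abs_of_nonneg ENNReal.toReal_nonneg,
    ENNReal.ofReal_toReal hx]

theorem biInf_eq_of_forall_le_of_lt_top {α : Type*} {s : Set α} {Φ : α → ℝ≥0∞} {t : ℝ≥0∞}
    (hle : ∀ a ∈ s, t ≤ Φ a) (hex : t < ⊤ → ∃ a ∈ s, Φ a ≤ t) : ⨅ a ∈ s, Φ a = t := by
  refine le_antisymm ?_ (le_iInf₂ hle)
  rcases eq_or_ne t ⊤ with ht | ht
  · exact ht ▸ le_top
  · obtain ⟨a, ha, hat⟩ := hex ht.lt_top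
    exact (iInf₂_le a ha).trans hat

section ContinuedFraction

variable {V : Type*} {chi : V → Set V} {w : V → ℝ≥0∞}

theorem cInfAux_monotone (v : V) : Monotone fun m => cInfAux chi w m v := by
  refine monotone_nat_of_le_succ fun m => ?_
  induction m generalizing v with
  | zero => simp [cInfAux]
  | succ m ih =>
    simp only [cInfAux]
    split_ifs
    · exact le_rfl
    · gcongr with u
      exact ih u.1

theorem cInfC_eq_inv_tsum_inv_rInfC {v : V} (hdef : ∑' u : ↥(chi v), (w u.1)⁻¹ ≠ ⊤)
    (hv : chi v ≠ ∅) : cInfC chi w v = (∑' u : ↥(chi v), (rInfC chi w u.1)⁻¹)⁻¹ := by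
  have hmax : ∀ u, rInfC chi w u = ⨆ m, max (w u) (cInfAux chi w m u) := fun u => by
    rw [rInfC, cInfC, sup_iSup]
  have hanti : Antitone fun m (u : ↥(chi v)) => (max (w u.1) (cInfAux chi w m u.1))⁻¹ :=
    fun m n hmn u => ENNReal.inv_le_inv.mpr (max_le_max le_rfl (cInfAux_monotone u.1 hmn))
  calc cInfC chi w v = ⨆ m, cInfAux chi w (m + 1) v :=
        ((cInfAux_monotone v).iSup_nat_add 1).symm
    _ = ⨆ m, (∑' u : ↥(chi v), (max (w u.1) (cInfAux chi w m u.1))⁻¹)⁻¹ := by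
        simp only [cInfAux, if_neg hv]
    _ = (∑' u : ↥(chi v), (rInfC chi w u.1)⁻¹)⁻¹ := by
        rw [← ENNReal.inv_iInf, ← tsum_iInf_of_antitone hanti (by simpa [cInfAux] using hdef)]
        simp only [hmax, ENNReal.inv_iSup]

theorem cInfC_le_rInfC_of_mem {v u : V} (hdef : ∑' u : ↥(chi v), (w u.1)⁻¹ ≠ ⊤)
    (hu : u ∈ chi v) : cInfC chi w v ≤ rInfC chi w u := by
  rw [cInfC_eq_inv_tsum_inv_rInfC hdef (Set.nonempty_of_mem hu).ne_empty]
  exact ENNReal.inv_le_iff_inv_le.mpr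
    (ENNReal.le_tsum (f := fun u : ↥(chi v) => (rInfC chi w u.1)⁻¹) ⟨u, hu⟩)

theorem tsum_inv_rInfC_ne_top {v : V} (hdef : ∑' u : ↥(chi v), (w u.1)⁻¹ ≠ ⊤) :
    ∑' u : ↥(chi v), (rInfC chi w u.1)⁻¹ ≠ ⊤ :=
  ne_top_of_le_ne_top hdef
    (ENNReal.tsum_le_tsum fun _ => ENNReal.inv_le_inv.mpr (le_max_left _ _))

end ContinuedFraction

section LowerBound

variable {𝕜 : Type*} [RCLike 𝕜] {V : Type*} {par : V → Option V} {root : V}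
  {w : V → ℝ≥0∞} {g : V → 𝕜}

theorem enorm_mul_cInfAux_le_supNormOn (hroot : IsRoot par root) (hw : ∀ v, w v ≠ 0)
    (hg : BackwardInv (children par) g) (m : ℕ) (v : V) :
    ‖g v‖ₑ * cInfAux (children par) w m v ≤ supNormOn w {x | x ≠ root} g := by
  set S := supNormOn w {x | x ≠ root} g
  induction m generalizing v with
  | zero => simp [cInfAux]
  | succ m ih =>
    rcases eq_or_ne S ⊤ with hS | hS
    · exact hS ▸ le_top
    by_cases hv : children par v = ∅
    · simp [cInfAux, hv]
    set T := ∑' u : ↥(children par v), (max (w u.1) (cInfAux (children par) w m u.1))⁻¹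
    have hchild : ∀ u : ↥(children par v),
        ‖g u.1‖ₑ ≤ S * (max (w u.1) (cInfAux (children par) w m u.1))⁻¹ := fun u => by
      rw [← div_eq_mul_inv, ENNReal.le_div_iff_mul_le (Or.inl (by simp [hw])) (Or.inr hS)]
      rcases max_choice (w u.1) (cInfAux (children par) w m u.1) with h | h <;> rw [h]
      · exact le_iSup (fun x : ↥{x | x ≠ root} => ‖g x.1‖ₑ * w x.1)
          ⟨u.1, ne_root_of_par_eq_some hroot u.2⟩
      · exact ih u.1
    have hgv : ‖g v‖ₑ ≤ S * T :=
      calc ‖g v‖ₑ = ‖∑' u : ↥(children par v), g u.1‖ₑ := by rw [(hg v hv).tsum_eq]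
        _ ≤ ∑' u : ↥(children par v), ‖g u.1‖ₑ := enorm_tsum_le_tsum_enorm
        _ ≤ S * T := (ENNReal.tsum_le_tsum hchild).trans_eq ENNReal.tsum_mul_left
    calc ‖g v‖ₑ * cInfAux (children par) w (m + 1) v = ‖g v‖ₑ * T⁻¹ := by
          simp only [cInfAux, if_neg hv, T]
      _ ≤ S * (T * T⁻¹) := by rw [← mul_assoc]; gcongr
      _ ≤ S := mul_le_of_le_one_right' (ENNReal.mul_inv_le_one T)

theorem cInfC_le_supNormOn (hroot : IsRoot par root) (hw : ∀ v, w v ≠ 0)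
    (hg : BackwardInv (children par) g) (hg1 : g root = 1) :
    cInfC (children par) w root ≤ supNormOn w {x | x ≠ root} g :=
  iSup_le fun m => by
    simpa [hg1] using enorm_mul_cInfAux_le_supNormOn hroot hw hg m root

theorem rInfC_le_supNormOn (hroot : IsRoot par root) (hw : ∀ v, w v ≠ 0)
    (hg : BackwardInv (children par) g) (hg1 : g root = 1) :
    rInfC (children par) w root ≤ supNormOn w Set.univ g := by
  refine max_le ?_ ((cInfC_le_supNormOn hroot hw hg hg1).trans ?_)
  · exact le_iSup_of_le (⟨root, trivial⟩ : ↥(Set.univ : Set V)) (by simp [hg1])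
  · exact iSup_le fun x => le_iSup (fun y : ↥(Set.univ : Set V) => ‖g y.1‖ₑ * w y.1) ⟨x.1, trivial⟩

end LowerBound

section Extremal

variable {𝕜 : Type*} [RCLike 𝕜] {V : Type*} {par : V → Option V} {root : V} {w : V → ℝ≥0∞}

noncomputable def branchShare (par : V → Option V) (w : V → ℝ≥0∞) (v : V) : ℝ≥0∞ :=
  (par v).elim 1 fun p =>
    (rInfC (children par) w v)⁻¹ / ∑' u : ↥(children par p), (rInfC (children par) w u.1)⁻¹

noncomputable def extremalSeq (par : V → Option V) (root : V) (w : V → ℝ≥0∞) (v : V) : ℝ≥0∞ :=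
  pathProd par (branchShare par w) (depth par root v) v

theorem branchShare_of_par_eq_some {v p : V} (h : par v = some p) :
    branchShare par w v =
      (rInfC (children par) w v)⁻¹ / ∑' u : ↥(children par p), (rInfC (children par) w u.1)⁻¹ := by
  simp [branchShare, h]

theorem branchShare_le_one (v : V) : branchShare par w v ≤ 1 := by
  cases h : par v with
  | none => simp [branchShare, h]
  | some p =>
    rw [branchShare_of_par_eq_some h]
    exact ENNReal.div_le_of_le_mul (by
      rw [one_mul]
      exact ENNReal.le_tsum (f := fun u : ↥(children par p) => (rInfC (children par) w u.1)⁻¹)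
        ⟨v, h⟩)

theorem extremalSeq_root : extremalSeq par root w root = 1 := by
  rw [extremalSeq, depth_root, pathProd]

theorem extremalSeq_of_par_eq_some (hTree : IsDirectedTree par) (hroot : IsRoot par root)
    {v p : V} (h : par v = some p) :
    extremalSeq par root w v = branchShare par w v * extremalSeq par root w p := by
  rw [extremalSeq, depth_of_par_eq_some hTree hroot h, pathProd, h]
  rfl

theorem extremalSeq_le_one (hTree : IsDirectedTree par) (hroot : IsRoot par root) (v : V) :
    extremalSeq par root w v ≤ 1 :=
  hTree.induction_from_root hroot extremalSeq_root.le (fun v p h hp => by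
    rw [extremalSeq_of_par_eq_some hTree hroot h]
    exact mul_le_one' (branchShare_le_one v) hp) v

theorem extremalSeq_ne_top (hTree : IsDirectedTree par) (hroot : IsRoot par root) (v : V) :
    extremalSeq par root w v ≠ ⊤ :=
  ne_top_of_le_ne_top ENNReal.one_ne_top (extremalSeq_le_one hTree hroot v)

theorem extremalSeq_eq_zero (hTree : IsDirectedTree par) (hroot : IsRoot par root) {v p : V}
    (h : par v = some p) (hv : rInfC (children par) w v = ⊤) : extremalSeq par root w v = 0 := by
  simp [extremalSeq_of_par_eq_some hTree hroot h, branchShare_of_par_eq_some h, hv]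

theorem extremalSeq_ne_zero (hTree : IsDirectedTree par) (hroot : IsRoot par root)
    (hw : ∀ v, w v ≠ ⊤) (hdef : ∀ v, ∑' u : ↥(children par v), (w u.1)⁻¹ ≠ ⊤) {v : V}
    (hv : rInfC (children par) w v ≠ ⊤) :
    extremalSeq par root w v ≠ 0 := by
  revert hv
  refine hTree.induction_from_root hroot (by simp [extremalSeq_root]) (fun v p h hp hv => ?_) v
  have hpv : cInfC (children par) w p ≤ rInfC (children par) w v := cInfC_le_rInfC_of_mem (hdef p) h
  rw [extremalSeq_of_par_eq_some hTree hroot h, branchShare_of_par_eq_some h]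
  exact mul_ne_zero
    (ENNReal.div_pos (ENNReal.inv_ne_zero.mpr hv) (tsum_inv_rInfC_ne_top (hdef p))).ne'
    (hp (max_lt (hw p).lt_top (hpv.trans_lt hv.lt_top)).ne)

theorem extremalSeq_mul_rInfC_le (hTree : IsDirectedTree par) (hroot : IsRoot par root)
    (hdef : ∀ v, ∑' u : ↥(children par v), (w u.1)⁻¹ ≠ ⊤) {v p : V} (h : par v = some p) :
    extremalSeq par root w v * rInfC (children par) w v
      ≤ extremalSeq par root w p * cInfC (children par) w p := by
  rw [extremalSeq_of_par_eq_some hTree hroot h, branchShare_of_par_eq_some h,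
    cInfC_eq_inv_tsum_inv_rInfC (hdef p) (children_nonempty_of_par_eq_some h).ne_empty,
    div_eq_mul_inv]
  calc _ = extremalSeq par root w p
        * (∑' u : ↥(children par p), (rInfC (children par) w u.1)⁻¹)⁻¹
        * ((rInfC (children par) w v)⁻¹ * rInfC (children par) w v) := by ring
    _ ≤ _ := mul_le_of_le_one_right' (ENNReal.inv_mul_le_one _)

theorem extremalSeq_mul_cInfC_le (hTree : IsDirectedTree par) (hroot : IsRoot par root)
    (hdef : ∀ v, ∑' u : ↥(children par v), (w u.1)⁻¹ ≠ ⊤) (v : V) :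
    extremalSeq par root w v * cInfC (children par) w v ≤ cInfC (children par) w root :=
  hTree.induction_from_root hroot (by rw [extremalSeq_root, one_mul]) (fun v p h hp =>
    calc extremalSeq par root w v * cInfC (children par) w v
        ≤ extremalSeq par root w v * rInfC (children par) w v := by gcongr; exact le_max_right _ _
      _ ≤ extremalSeq par root w p * cInfC (children par) w p :=
        extremalSeq_mul_rInfC_le hTree hroot hdef h
      _ ≤ cInfC (children par) w root := hp) v

theorem extremalSeq_mul_rInfC_le_cInfC_root (hTree : IsDirectedTree par)
    (hroot : IsRoot par root) (hdef : ∀ v, ∑' u : ↥(children par v), (w u.1)⁻¹ ≠ ⊤) {v : V}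
    (hv : v ≠ root) :
    extremalSeq par root w v * rInfC (children par) w v ≤ cInfC (children par) w root := by
  obtain ⟨p, h⟩ := hTree.exists_par_eq_some hroot hv
  exact (extremalSeq_mul_rInfC_le hTree hroot hdef h).trans
    (extremalSeq_mul_cInfC_le hTree hroot hdef p)

theorem tsum_extremalSeq_children (hTree : IsDirectedTree par) (hroot : IsRoot par root)
    (hdef : ∀ v, ∑' u : ↥(children par v), (w u.1)⁻¹ ≠ ⊤)
    (hfin : rInfC (children par) w root ≠ ⊤) {v : V} (hv : children par v ≠ ∅) :
    ∑' u : ↥(children par v), extremalSeq par root w u.1 = extremalSeq par root w v := by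
  set D := ∑' u : ↥(children par v), (rInfC (children par) w u.1)⁻¹
  have hsum : ∑' u : ↥(children par v), extremalSeq par root w u.1
      = D * D⁻¹ * extremalSeq par root w v := by
    have hu : ∀ u : ↥(children par v), extremalSeq par root w u.1
        = (rInfC (children par) w u.1)⁻¹ * D⁻¹ * extremalSeq par root w v := fun u => by
      rw [extremalSeq_of_par_eq_some hTree hroot u.2, branchShare_of_par_eq_some u.2,
        div_eq_mul_inv]
    rw [tsum_congr hu, ENNReal.tsum_mul_right, ENNReal.tsum_mul_right]
  rcases eq_or_ne D 0 with hD0 | hD0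
  · -- then `c_∞(V(v)) = D⁻¹ = ∞`, so `v` is not the root and `f v = 0`
    have hrv : rInfC (children par) w v = ⊤ := by
      rw [rInfC, cInfC_eq_inv_tsum_inv_rInfC (hdef v) hv]
      change max (w v) D⁻¹ = ⊤
      rw [hD0, ENNReal.inv_zero, max_top_right]
    obtain ⟨p, h⟩ := hTree.exists_par_eq_some hroot fun h => hfin (h ▸ hrv)
    rw [hsum, hD0, extremalSeq_eq_zero hTree hroot h hrv, mul_zero]
  · rw [hsum, ENNReal.mul_inv_cancel hD0 (tsum_inv_rInfC_ne_top (hdef v)), one_mul]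

theorem backwardInv_extremalSeq (hTree : IsDirectedTree par) (hroot : IsRoot par root)
    (hdef : ∀ v, ∑' u : ↥(children par v), (w u.1)⁻¹ ≠ ⊤)
    (hfin : rInfC (children par) w root ≠ ⊤) :
    BackwardInv (children par) fun v => ((extremalSeq par root w v).toReal : 𝕜) := fun v hv => by
  have hsum := tsum_extremalSeq_children hTree hroot hdef hfin hv
  have h := hasSum_ofReal_toReal (𝕜 := 𝕜)
    (f := fun u : ↥(children par v) => extremalSeq par root w u.1)
    (hsum ▸ extremalSeq_ne_top hTree hroot v)
  rwa [hsum] at h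

theorem supNormOn_ne_root_extremalSeq_le (hTree : IsDirectedTree par) (hroot : IsRoot par root)
    (hdef : ∀ v, ∑' u : ↥(children par v), (w u.1)⁻¹ ≠ ⊤) :
    supNormOn w {x | x ≠ root} (fun v => ((extremalSeq par root w v).toReal : 𝕜))
      ≤ cInfC (children par) w root :=
  iSup_le fun x => by
    rw [nnnorm_ofReal_toReal (extremalSeq_ne_top hTree hroot x.1)]
    exact (mul_le_mul_right (le_max_left _ _) _).trans
      (extremalSeq_mul_rInfC_le_cInfC_root hTree hroot hdef x.2)

theorem supNormOn_univ_extremalSeq_le (hTree : IsDirectedTree par) (hroot : IsRoot par root)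
    (hdef : ∀ v, ∑' u : ↥(children par v), (w u.1)⁻¹ ≠ ⊤) :
    supNormOn w Set.univ (fun v => ((extremalSeq par root w v).toReal : 𝕜))
      ≤ rInfC (children par) w root :=
  iSup_le fun x => by
    rw [nnnorm_ofReal_toReal (extremalSeq_ne_top hTree hroot x.1)]
    by_cases hx : x.1 = root
    · rw [hx, extremalSeq_root, one_mul]
      exact le_max_left _ _
    · exact ((mul_le_mul_right (le_max_left _ _) _).trans
        (extremalSeq_mul_rInfC_le_cInfC_root hTree hroot hdef hx)).trans (le_max_right _ _)

end Extremal

/-- Theorem 6.9 / `t-charinfinv`: the case `p = ∞` on an arbitrary rooted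
tree, assuming the backward shift is defined on `ℓ^∞(V,μ)` (equivalently `c₀(V,μ)`): the
infima over backward invariant sequences equal `r_∞` resp. `c_∞`, and when finite they are
attained; one minimizer is given by the explicit formula (in recursive form). -/
theorem statement9
    {𝕜 : Type*} [RCLike 𝕜] {V : Type*} (par : V → Option V) (hTree : IsDirectedTree par)
    (root : V) (hroot : IsRoot par root) (μ : V → 𝕜) (hμ : ∀ v : V, μ v ≠ 0)
    (hdef : ∀ v : V, (∑' u : ↥(children par v), (nw μ u.1)⁻¹) < ⊤) :
    -- (a)
    ((⨅ g ∈ {g : V → 𝕜 | BackwardInv (children par) g ∧ g root = 1},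
        supNormOn (nw μ) Set.univ g) = rInfC (children par) (nw μ) root ∧
      (⨅ g ∈ {g : V → 𝕜 | BackwardInv (children par) g ∧ g root = 1},
        supNormOn (nw μ) {v : V | v ≠ root} g) = cInfC (children par) (nw μ) root) ∧
    -- (b)
    (rInfC (children par) (nw μ) root < ⊤ →
      ∃ f : V → 𝕜,
        BackwardInv (children par) f ∧ f root = 1 ∧
        supNormOn (nw μ) Set.univ f = rInfC (children par) (nw μ) root ∧
        supNormOn (nw μ) {v : V | v ≠ root} f = cInfC (children par) (nw μ) root ∧
        (∀ v w : V, par v = some w →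
          (rInfC (children par) (nw μ) v = ⊤ → f v = 0) ∧
          (rInfC (children par) (nw μ) v < ⊤ →
            f v = ((((rInfC (children par) (nw μ) v)⁻¹ /
                  ∑' u : ↥(children par w),
                    (rInfC (children par) (nw μ) u.1)⁻¹).toReal : 𝕜)) * f w)) ∧
        ∀ v : V, rInfC (children par) (nw μ) v < ⊤ → ∃ r : ℝ, 0 < r ∧ f v = (r : 𝕜)) := by
  have hw0 : ∀ v, nw μ v ≠ 0 := fun v => by simpa [nw] using hμ v
  have hdef' : ∀ v, ∑' u : ↥(children par v), (nw μ u.1)⁻¹ ≠ ⊤ := fun v => (hdef v).ne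
  set f : V → 𝕜 := fun v => ((extremalSeq par root (nw μ) v).toReal : 𝕜)
  have hf1 : f root = 1 := by simp [f, extremalSeq_root]
  have hf (hfin : rInfC (children par) (nw μ) root < ⊤) : BackwardInv (children par) f :=
    backwardInv_extremalSeq hTree hroot hdef' hfin.ne
  have hfr := supNormOn_univ_extremalSeq_le (𝕜 := 𝕜) hTree hroot hdef'
  have hfc := supNormOn_ne_root_extremalSeq_le (𝕜 := 𝕜) hTree hroot hdef'
  refine ⟨⟨?_, ?_⟩, fun hfin => ⟨f, hf hfin, hf1,
    hfr.antisymm (rInfC_le_supNormOn hroot hw0 (hf hfin) hf1),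
    hfc.antisymm (cInfC_le_supNormOn hroot hw0 (hf hfin) hf1), fun v p h => ⟨?_, ?_⟩,
    fun v hv => ?_⟩⟩
  · exact biInf_eq_of_forall_le_of_lt_top (fun g hg => rInfC_le_supNormOn hroot hw0 hg.1 hg.2)
      fun hr => ⟨f, ⟨hf hr, hf1⟩, hfr⟩
  · exact biInf_eq_of_forall_le_of_lt_top (fun g hg => cInfC_le_supNormOn hroot hw0 hg.1 hg.2)
      fun hc => ⟨f, ⟨hf (max_lt ENNReal.coe_lt_top hc), hf1⟩, hfc⟩
  · intro hv
    simp [f, extremalSeq_eq_zero hTree hroot h hv]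
  · intro _
    simp only [f]
    rw [extremalSeq_of_par_eq_some hTree hroot h, branchShare_of_par_eq_some h,
      ENNReal.toReal_mul, RCLike.ofReal_mul]
  · have hw : ∀ v, nw μ v ≠ ⊤ := fun _ => ENNReal.coe_ne_top
    exact ⟨_, ENNReal.toReal_pos (extremalSeq_ne_zero hTree hroot hw hdef' hv.ne)
      (extremalSeq_ne_top hTree hroot v), rfl⟩
end PaperTree
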